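/- Let A = ⊕ₙ Aₙ be a graded connected associative ℚ-algebra, completed along the grading, and let σ = 1 + (higher degree terms) with homogeneous components σₙ ∈ Aₙ. Fix r ≥ 2. Then there exists a unique family of elements ζₙ^{(r)} ∈ Aₙ (n ≥ 1) such that σ = (Σ_{p≥0} ζ_{pr}^{(r)}) · ∏^{←}_{i≥1, r∤i} exp(ζ_i^{(r)}), where ζ₀^{(r)} := 1. Moreover ζₙ^{(r)} = ζₙ (the ordinary Zassenhaus elements of the factorization σ = ∏^{←}_{k≥1} exp(ζ_k)) for all n < 2r. -/

import Mathlib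

/-
The degree-`n` coefficient of `(∑ₚ ζ_{pr}) ∏^{←}_{r∤i} exp(ζ_i)` is `ζ_n` plus a polynomial in the
`ζ_i` with `i < n`. Hence the equations `[tⁿ] σ = …` determine the family recursively, which gives
existence and uniqueness. Modulo `t^{2r}` one has `∑ₚ ζ_{pr} ≡ 1 + ζ_r tʳ ≡ exp(ζ_r tʳ)`, and this
factor commutes with every `exp(ζ_i tⁱ)` with `i ≥ r`; so in degrees `< 2r` the level-`r` and the
ordinary factorizations impose the same equations on the same unknowns.
-/

/- The completion of a graded connected associative ℚ-algebra is modeled as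
power series over a ℚ-algebra `R`, with the variable `t` recording the degree;
`ζₙ ∈ Aₙ` is encoded as `ζ n · tⁿ`. -/

/-- The formal exponential `exp (c · tᵏ) = ∑ⱼ cʲ tᵏʲ / j!` (for `k ≥ 1`). -/
noncomputable def expPow {R : Type*} [Ring R] [Algebra ℚ R] (k : ℕ) (c : R) :
    PowerSeries R :=
  PowerSeries.mk fun m =>
    if k ∣ m then (algebraMap ℚ R (((m / k).factorial : ℚ)⁻¹)) * c ^ (m / k) else 0

/-- Partial ordered product `∏^{←}_{1 ≤ i ≤ N, r ∤ i} exp(ζ_i tⁱ)`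
(larger indices on the left; indices divisible by `r` are skipped). -/
noncomputable def skipDown {R : Type*} [Ring R] [Algebra ℚ R] (r : ℕ) (ζ : ℕ → R)
    (N : ℕ) : PowerSeries R :=
  (((List.range N).reverse).map
    (fun k => if r ∣ (k + 1) then 1 else expPow (k + 1) (ζ (k + 1)))).prod

/-- Partial ordered product `exp(ζ_N t^N) ⋯ exp(ζ₂ t²) exp(ζ₁ t)`. -/
noncomputable def zassDown {R : Type*} [Ring R] [Algebra ℚ R] (ζ : ℕ → R) (N : ℕ) :
    PowerSeries R :=
  (((List.range N).reverse).map (fun k => expPow (k + 1) (ζ (k + 1)))).prod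

/-- The series `T = 1 + ∑_{p ≥ 1} ζ_{rp} t^{rp}`. -/
noncomputable def Tser {R : Type*} [Ring R] (r : ℕ) (ζ : ℕ → R) : PowerSeries R :=
  PowerSeries.mk fun m => if m = 0 then 1 else if r ∣ m then ζ m else 0

/-- `z` is the level-`r` Zassenhaus family of `σ`:
`σ = (∑ₚ ζ^{(r)}_{pr}) ∏^{←}_{r∤i} exp(ζ^{(r)}_i)`, coefficientwise. -/
def IsLevelRZass {R : Type*} [Ring R] [Algebra ℚ R] (r : ℕ) (σ : PowerSeries R)
    (z : ℕ → R) : Prop :=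
  z 0 = 0 ∧ ∀ n N : ℕ, n ≤ N →
    PowerSeries.coeff n (Tser r z * skipDown r z N) = PowerSeries.coeff n σ

/-- `w` is the ordinary Zassenhaus family of `σ`: `σ = ⋯ exp(ζ₂) exp(ζ₁)`. -/
def IsOrdZass {R : Type*} [Ring R] [Algebra ℚ R] (σ : PowerSeries R)
    (w : ℕ → R) : Prop :=
  w 0 = 0 ∧ ∀ n N : ℕ, n ≤ N →
    PowerSeries.coeff n (zassDown w N) = PowerSeries.coeff n σ

theorem Nat.eq_zero_or_eq_of_dvd_of_lt_two_mul {k m : ℕ} (h : k ∣ m) (hm : m < 2 * k) :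
    m = 0 ∨ m = k := by
  obtain ⟨q, rfl⟩ := h
  rcases q with _ | _ | q
  · simp
  · simp
  · nlinarith

namespace PowerSeries

variable {R : Type*}

section Semiring

variable [Semiring R]

theorem trunc_eq_trunc_iff {n : ℕ} {f g : R⟦X⟧} :
    trunc n f = trunc n g ↔ ∀ m < n, coeff m f = coeff m g := by
  simp only [Polynomial.ext_iff, coeff_trunc]
  exact ⟨fun h m hm => by simpa [hm] using h m, fun h m => by split_ifs with hm <;> simp [h m, hm]⟩

theorem trunc_congr_of_le {m n : ℕ} {f g : R⟦X⟧} (h : trunc n f = trunc n g) (hmn : m ≤ n) :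
    trunc m f = trunc m g :=
  trunc_eq_trunc_iff.2 fun k hk => trunc_eq_trunc_iff.1 h k (hk.trans_le hmn)

theorem trunc_mul_congr {n : ℕ} {a a' b b' : R⟦X⟧} (ha : trunc n a = trunc n a')
    (hb : trunc n b = trunc n b') : trunc n (a * b) = trunc n (a' * b') := by
  rw [trunc_eq_trunc_iff] at *
  intro m hm
  simp only [coeff_mul]
  refine Finset.sum_congr rfl fun p hp => ?_
  rw [Finset.HasAntidiagonal.mem_antidiagonal] at hp
  rw [ha p.1 (by omega), hb p.2 (by omega)]

theorem trunc_monomial_of_le {m n : ℕ} (a : R) (h : m ≤ n) : trunc m (monomial n a) = 0 := by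
  ext k
  simp only [coeff_trunc, coeff_monomial, Polynomial.coeff_zero]
  split_ifs <;> first | rfl | omega

theorem trunc_one_add_monomial_mul_comm {n i j : ℕ} (a b : R) (h : n ≤ i + j) :
    trunc n ((1 + monomial i a) * (1 + monomial j b)) =
      trunc n ((1 + monomial j b) * (1 + monomial i a)) := by
  simp only [add_mul, mul_add, one_mul, mul_one, monomial_mul_monomial, map_add,
    trunc_monomial_of_le _ h, trunc_monomial_of_le _ (h.trans_eq (add_comm i j))]
  abel

end Semiring

section Ring

variable [Ring R]

theorem coeff_mul_sub_coeff_mul {n : ℕ} {a a' b b' : R⟦X⟧} (ha : trunc n a = trunc n a')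
    (hb : trunc n b = trunc n b') :
    coeff n (a * b) - coeff n (a' * b') =
      (coeff n a - coeff n a') * constantCoeff b + constantCoeff a' * (coeff n b - coeff n b') := by
  have dvd_sub {f g : R⟦X⟧} (h : trunc n f = trunc n g) : X ^ n ∣ f - g :=
    X_pow_dvd_iff.2 fun m hm => by rw [map_sub, sub_eq_zero, trunc_eq_trunc_iff.1 h m hm]
  obtain ⟨p, hp⟩ := dvd_sub ha
  obtain ⟨q, hq⟩ := dvd_sub hb
  have hprod : a * b - a' * b' = X ^ n * (p * b + a' * q) := by
    rw [mul_add, ← mul_assoc, ← hp, ← mul_assoc, ← (commute_X_pow a' n).eq, mul_assoc, ← hq]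
    noncomm_ring
  have coeff_n (f : R⟦X⟧) : coeff n (X ^ n * f) = constantCoeff f := by
    simpa using coeff_X_pow_mul f n 0
  rw [← map_sub, ← map_sub, ← map_sub, hprod, hp, hq, coeff_n, coeff_n, coeff_n]
  simp only [map_add, map_mul]

end Ring

end PowerSeries

open PowerSeries

section Zassenhaus

variable {R : Type*} [Ring R]

theorem coeff_Tser (r m : ℕ) (z : ℕ → R) :
    coeff m (Tser r z) = if m = 0 then 1 else if r ∣ m then z m else 0 :=
  coeff_mk _ _

theorem constantCoeff_Tser (r : ℕ) (z : ℕ → R) : constantCoeff (Tser r z) = 1 := by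
  simp [← coeff_zero_eq_constantCoeff_apply, coeff_Tser]

theorem trunc_Tser (r : ℕ) (z : ℕ → R) :
    trunc (2 * r) (Tser r z) = trunc (2 * r) (1 + monomial r (z r)) := by
  refine trunc_eq_trunc_iff.2 fun m hm => ?_
  rw [coeff_Tser, map_add, coeff_one, coeff_monomial]
  by_cases hrm : r ∣ m
  · obtain rfl | rfl := Nat.eq_zero_or_eq_of_dvd_of_lt_two_mul hrm hm
    · simp [show 0 ≠ r by omega]
    · simp [show m ≠ 0 by omega]
  · have h0 : m ≠ 0 := by rintro rfl; exact hrm (dvd_zero r)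
    have hr : m ≠ r := by rintro rfl; exact hrm dvd_rfl
    simp [hrm, h0, hr]

variable [Algebra ℚ R]

theorem coeff_expPow (k m : ℕ) (c : R) :
    coeff m (expPow k c) =
      if k ∣ m then algebraMap ℚ R ((m / k).factorial : ℚ)⁻¹ * c ^ (m / k) else 0 :=
  coeff_mk _ _

theorem constantCoeff_expPow (k : ℕ) (c : R) : constantCoeff (expPow k c) = 1 := by
  simp [← coeff_zero_eq_constantCoeff_apply, coeff_expPow]

theorem trunc_expPow (k : ℕ) (c : R) :
    trunc (2 * k) (expPow k c) = trunc (2 * k) (1 + monomial k c) := by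
  refine trunc_eq_trunc_iff.2 fun m hm => ?_
  rw [coeff_expPow, map_add, coeff_one, coeff_monomial]
  by_cases hkm : k ∣ m
  · obtain rfl | rfl := Nat.eq_zero_or_eq_of_dvd_of_lt_two_mul hkm hm
    · simp [show 0 ≠ k by omega]
    · have hk : 0 < m := by omega
      simp [hk.ne', Nat.div_self hk]
  · have h0 : m ≠ 0 := by rintro rfl; exact hkm (dvd_zero k)
    have hk : m ≠ k := by rintro rfl; exact hkm dvd_rfl
    simp [hkm, h0, hk]

theorem trunc_expPow_of_le {m k : ℕ} (c : R) (h : m ≤ k) :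
    trunc m (expPow k c) = trunc m 1 := by
  rw [trunc_congr_of_le (trunc_expPow k c) (by omega), map_add,
    trunc_monomial_of_le c h, add_zero]

theorem coeff_expPow_self (k : ℕ) (c : R) (hk : 0 < k) : coeff k (expPow k c) = c := by
  simp [coeff_expPow, Nat.div_self hk]

theorem skipDown_zero (r : ℕ) (z : ℕ → R) : skipDown r z 0 = 1 := by
  simp [skipDown]

theorem skipDown_succ (r N : ℕ) (z : ℕ → R) :
    skipDown r z (N + 1) =
      (if r ∣ N + 1 then 1 else expPow (N + 1) (z (N + 1))) * skipDown r z N := by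
  simp [skipDown, List.range_succ]

theorem zassDown_zero (z : ℕ → R) : zassDown z 0 = 1 := by
  simp [zassDown]

theorem zassDown_succ (N : ℕ) (z : ℕ → R) :
    zassDown z (N + 1) = expPow (N + 1) (z (N + 1)) * zassDown z N := by
  simp [zassDown, List.range_succ]

theorem constantCoeff_skipDown (r N : ℕ) (z : ℕ → R) : constantCoeff (skipDown r z N) = 1 := by
  induction N with
  | zero => simp [skipDown_zero]
  | succ N ih =>
    rw [skipDown_succ, map_mul, ih, mul_one]
    split_ifs
    · exact map_one _
    · exact constantCoeff_expPow _ _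

theorem skipDown_congr {r N : ℕ} {z z' : ℕ → R} (h : ∀ i, 0 < i → i ≤ N → z i = z' i) :
    skipDown r z N = skipDown r z' N := by
  induction N with
  | zero => simp [skipDown_zero]
  | succ N ih =>
    rw [skipDown_succ, skipDown_succ, h (N + 1) N.succ_pos le_rfl,
      ih fun i hi hiN => h i hi (by omega)]

theorem skipDown_eq_zassDown {r N : ℕ} (z : ℕ → R) (hN : N < r) :
    skipDown r z N = zassDown z N := by
  induction N with
  | zero => rw [skipDown_zero, zassDown_zero]
  | succ N ih =>
    rw [skipDown_succ, zassDown_succ, if_neg (Nat.not_dvd_of_pos_of_lt N.succ_pos hN),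
      ih (by omega)]

theorem trunc_skipDown_of_le {r n N : ℕ} (z : ℕ → R) (h : n ≤ N) :
    trunc (n + 1) (skipDown r z N) = trunc (n + 1) (skipDown r z n) := by
  induction N, h using Nat.le_induction with
  | base => rfl
  | succ N hnN ih =>
    rw [skipDown_succ, ← one_mul (skipDown r z n)]
    refine trunc_mul_congr ?_ ih
    split_ifs
    · rfl
    · exact trunc_expPow_of_le _ (by omega)

/-- The new parameter `z n` enters either through `Tser` (if `r ∣ n`) or through the factor
`expPow n (z n) ≡ 1 + z n tⁿ`, never both. -/
theorem coeff_Tser_mul_skipDown_sub {r n : ℕ} {z z' : ℕ → R} (hn : 0 < n)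
    (h : ∀ i < n, z i = z' i) :
    coeff n (Tser r z * skipDown r z n) - coeff n (Tser r z' * skipDown r z' n) = z n - z' n := by
  obtain ⟨k, rfl⟩ : ∃ k, n = k + 1 := ⟨n - 1, by omega⟩
  have hT : trunc (k + 1) (Tser r z) = trunc (k + 1) (Tser r z') :=
    trunc_eq_trunc_iff.2 fun m hm => by simp only [coeff_Tser, h m hm]
  have hE (c : ℕ → R) : trunc (k + 1)
      (if r ∣ k + 1 then 1 else expPow (k + 1) (c (k + 1))) = trunc (k + 1) 1 := by
    split_ifs
    · rfl
    · exact trunc_expPow_of_le _ le_rfl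
  rw [skipDown_succ, skipDown_succ, skipDown_congr fun i _ hi => h i (by omega),
    coeff_mul_sub_coeff_mul hT (trunc_mul_congr ((hE z).trans (hE z').symm) rfl),
    coeff_mul_sub_coeff_mul ((hE z).trans (hE z').symm) rfl]
  by_cases hr : r ∣ k + 1
  · simp [coeff_Tser, hr, constantCoeff_skipDown]
  · simp [coeff_Tser, hr, constantCoeff_skipDown, constantCoeff_Tser,
      coeff_expPow_self _ _ k.succ_pos]

theorem eq_of_coeff_Tser_mul_skipDown_eq {r M : ℕ} {z z' : ℕ → R} (h0 : z 0 = z' 0)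
    (h : ∀ n, 0 < n → n < M →
      coeff n (Tser r z * skipDown r z n) = coeff n (Tser r z' * skipDown r z' n)) :
    ∀ n < M, z n = z' n := by
  intro n
  induction n using Nat.strong_induction_on with
  | _ n ih =>
    intro hn
    rcases Nat.eq_zero_or_pos n with rfl | hpos
    · exact h0
    · rw [← sub_eq_zero, ← coeff_Tser_mul_skipDown_sub hpos fun i hi => ih i hi (by omega),
        h n hpos hn, sub_self]

theorem IsLevelRZass.eq {r : ℕ} {σ : R⟦X⟧} {z z' : ℕ → R} (hz : IsLevelRZass r σ z)
    (hz' : IsLevelRZass r σ z') : z = z' :=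
  funext fun n => eq_of_coeff_Tser_mul_skipDown_eq (M := n + 1) (hz.1.trans hz'.1.symm)
    (fun m _ _ => (hz.2 m m le_rfl).trans (hz'.2 m m le_rfl).symm) n n.lt_succ_self

noncomputable def levelZass (r : ℕ) (σ : R⟦X⟧) : ℕ → R
  | 0 => 0
  | n + 1 =>
    let z : ℕ → R := fun i => if _ : i < n + 1 then levelZass r σ i else 0
    coeff (n + 1) σ - coeff (n + 1) (Tser r z * skipDown r z (n + 1))

theorem coeff_Tser_mul_skipDown_levelZass (r n : ℕ) {σ : R⟦X⟧} (hσ : constantCoeff σ = 1) :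
    coeff n (Tser r (levelZass r σ) * skipDown r (levelZass r σ) n) = coeff n σ := by
  cases n with
  | zero =>
    simp [coeff_zero_eq_constantCoeff_apply, skipDown_zero, constantCoeff_Tser, hσ]
  | succ n =>
    have hlow := coeff_Tser_mul_skipDown_sub (r := r) n.succ_pos
      (z' := fun i => if i < n + 1 then levelZass r σ i else 0) fun i hi => (if_pos hi).symm
    rw [if_neg (lt_irrefl _), sub_zero, levelZass] at hlow
    exact (sub_eq_iff_eq_add.1 hlow).trans (sub_add_cancel _ _)

theorem isLevelRZass_levelZass (r : ℕ) {σ : R⟦X⟧} (hσ : constantCoeff σ = 1) :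
    IsLevelRZass r σ (levelZass r σ) := by
  refine ⟨by rw [levelZass], fun n N hnN => ?_⟩
  rw [← coeff_Tser_mul_skipDown_levelZass r n hσ]
  exact trunc_eq_trunc_iff.1 (trunc_mul_congr rfl (trunc_skipDown_of_le _ hnN))
    n n.lt_succ_self

theorem trunc_Tser_mul_skipDown {r N : ℕ} (u : ℕ → R) (hrN : r ≤ N) (hN : N < 2 * r) :
    trunc (2 * r) (Tser r u * skipDown r u N) = trunc (2 * r) (zassDown u N) := by
  induction N, hrN using Nat.le_induction with
  | base =>
    obtain ⟨s, rfl⟩ : ∃ s, r = s + 1 := ⟨r - 1, by omega⟩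
    rw [skipDown_succ, if_pos dvd_rfl, one_mul, skipDown_eq_zassDown u s.lt_succ_self,
      zassDown_succ]
    exact trunc_mul_congr ((trunc_Tser _ u).trans (trunc_expPow _ _).symm) rfl
  | succ N hrN ih =>
    have hE : trunc (2 * r) (expPow (N + 1) (u (N + 1))) =
        trunc (2 * r) (1 + monomial (N + 1) (u (N + 1))) :=
      trunc_congr_of_le (trunc_expPow _ _) (by omega)
    have hndvd : ¬ r ∣ N + 1 := fun hd => by
      rcases Nat.eq_zero_or_eq_of_dvd_of_lt_two_mul hd (by omega) with h | h <;> omega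
    rw [skipDown_succ, if_neg hndvd, zassDown_succ]
    calc trunc (2 * r) (Tser r u * (expPow (N + 1) (u (N + 1)) * skipDown r u N))
        = trunc (2 * r) ((1 + monomial r (u r)) * (1 + monomial (N + 1) (u (N + 1))) *
            skipDown r u N) := by
          rw [← mul_assoc]
          exact trunc_mul_congr (trunc_mul_congr (trunc_Tser r u) hE) rfl
      _ = trunc (2 * r) ((1 + monomial (N + 1) (u (N + 1))) * (1 + monomial r (u r)) *
            skipDown r u N) :=
          trunc_mul_congr (trunc_one_add_monomial_mul_comm _ _ (by omega)) rfl
      _ = trunc (2 * r) (expPow (N + 1) (u (N + 1)) * (Tser r u * skipDown r u N)) := by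
          rw [mul_assoc]
          exact trunc_mul_congr hE.symm (trunc_mul_congr (trunc_Tser r u).symm rfl)
      _ = trunc (2 * r) (expPow (N + 1) (u (N + 1)) * zassDown u N) :=
          trunc_mul_congr rfl (ih (by omega))

theorem coeff_Tser_mul_skipDown_eq_coeff_zassDown {r n : ℕ} (u : ℕ → R) (hn : n < 2 * r) :
    coeff n (Tser r u * skipDown r u n) = coeff n (zassDown u n) := by
  by_cases hnr : n < r
  · have hT : trunc (n + 1) (Tser r u) = trunc (n + 1) 1 := by
      rw [trunc_congr_of_le (trunc_Tser r u) (by omega), map_add,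
        trunc_monomial_of_le _ (by omega), add_zero]
    rw [skipDown_eq_zassDown u hnr]
    conv_rhs => rw [← one_mul (zassDown u n)]
    exact trunc_eq_trunc_iff.1 (trunc_mul_congr hT rfl) n n.lt_succ_self
  · exact trunc_eq_trunc_iff.1 (trunc_Tser_mul_skipDown u (by omega) hn) n hn

end Zassenhaus

theorem stmt_13_general (R : Type*) [Ring R] [Algebra ℚ R] (r : ℕ)
    (σ : PowerSeries R) (hσ : PowerSeries.constantCoeff σ = 1) :
    (∃! z : ℕ → R, IsLevelRZass r σ z) ∧
    ∀ z w : ℕ → R, IsLevelRZass r σ z → IsOrdZass σ w →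
      ∀ n : ℕ, 1 ≤ n → n < 2 * r → z n = w n := by
  refine ⟨⟨levelZass r σ, isLevelRZass_levelZass r hσ, fun z hz =>
    hz.eq (isLevelRZass_levelZass r hσ)⟩, fun z w hz hw n _ hn => ?_⟩
  refine eq_of_coeff_Tser_mul_skipDown_eq (r := r) (hz.1.trans hw.1.symm) (fun m _ hm => ?_) n hn
  rw [hz.2 m m le_rfl, coeff_Tser_mul_skipDown_eq_coeff_zassDown w hm, hw.2 m m le_rfl]

/-- For `σ = 1 + (higher terms)` and `r ≥ 2`, there is a unique family
`ζₙ^{(r)}` with `σ = (∑ₚ ζ^{(r)}_{pr}) ∏^{←}_{r∤i} exp(ζ_i^{(r)})`; moreover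
`ζₙ^{(r)} = ζₙ` (the ordinary Zassenhaus elements) for all `n < 2r`. -/
theorem stmt_13 (R : Type*) [Ring R] [Algebra ℚ R] (r : ℕ) (hr : 2 ≤ r)
    (σ : PowerSeries R) (hσ : PowerSeries.constantCoeff σ = 1) :
    (∃! z : ℕ → R, IsLevelRZass r σ z) ∧
    ∀ z w : ℕ → R, IsLevelRZass r σ z → IsOrdZass σ w →
      ∀ n : ℕ, 1 ≤ n → n < 2 * r → z n = w n :=
  stmt_13_general R r σ hσ
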